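/- arXiv:2511.17049 — 2 statements merged into one kernel-verified Lean document; each statement's English description precedes it below -/
import Mathlib

section
/- Fix t ∈ [0,T] and X ∈ L²(F_T), and define h(x) := E[l(t, x + X)] for x ∈ ℝ. Under the assumptions on l and E, the function h is strictly increasing, continuous, satisfies h(x) ≥ E[l(t,X)] + c_l x e^{-κT} for x ≥ 0 and h(-x) ≤ E[l(t,X)] - c_l x e^{-κT} for x ≥ 0, hence lim_{x→+∞} h(x) = +∞ and lim_{x→-∞} h(x) = -∞, and therefore h: ℝ → ℝ is a bijection and possesses an inverse. -/
open MeasureTheory Real Set Filter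

/-!
The lower g-expectation turns the pointwise increment `l(t, y + X) - l(t, x + X) ≥ c_l (y - x)`
into `h y - h x ≥ c_l e^{-κT} (y - x)`, which gives strict monotonicity and the linear growth at
`±∞`. The upper g-expectation, through its L² estimate, turns the pointwise bound
`|l(t, y + X) - l(t, x + X)| ≤ C_l |y - x|` into a Lipschitz bound for `h`. A continuous function
tending to `±∞` at `±∞` is onto by the intermediate value theorem.
-/

lemma StrictMono.mul_sub_le_sub {f : ℝ → ℝ} (hf : StrictMono f) {c : ℝ}
    (hc : ∀ x y, c * |x - y| ≤ |f x - f y|) {a b : ℝ} (hab : a ≤ b) :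
    c * (b - a) ≤ f b - f a := by
  have h := hc b a
  rwa [abs_of_nonneg (sub_nonneg.2 hab), abs_of_nonneg (sub_nonneg.2 (hf.monotone hab))] at h

section IncreasingFasterThanLinear

variable {h : ℝ → ℝ} {c : ℝ}

lemma strictMono_of_mul_sub_le_sub (hc : 0 < c) (hh : ∀ x y, x ≤ y → c * (y - x) ≤ h y - h x) :
    StrictMono h := fun x y hxy => by
  nlinarith [hh x y hxy.le]

lemma tendsto_atTop_atTop_of_mul_sub_le_sub (hc : 0 < c)
    (hh : ∀ x y, x ≤ y → c * (y - x) ≤ h y - h x) : Tendsto h atTop atTop := by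
  refine tendsto_atTop_mono' _ ?_
    (tendsto_atTop_add_const_left _ (h 0) (tendsto_id.const_mul_atTop hc))
  filter_upwards [eventually_ge_atTop 0] with x hx
  dsimp only [id]
  linarith [hh 0 x hx]

lemma tendsto_atBot_atBot_of_mul_sub_le_sub (hc : 0 < c)
    (hh : ∀ x y, x ≤ y → c * (y - x) ≤ h y - h x) : Tendsto h atBot atBot := by
  refine tendsto_atBot_mono' _ ?_
    (tendsto_atBot_add_const_left _ (h 0) (tendsto_id.const_mul_atBot hc))
  filter_upwards [eventually_le_atBot 0] with x hx
  dsimp only [id]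
  linarith [hh x 0 hx]

end IncreasingFasterThanLinear

section DominatedFunctional

variable {Ω : Type*} [MeasurableSpace Ω] {P : Measure Ω} {E G : (Ω → ℝ) → ℝ}

lemma abs_le_sqrt_mul_of_sq_le_mul_integral_sq [IsProbabilityMeasure P] {C g M : ℝ}
    {Z : Ω → ℝ} (hg : g ^ 2 ≤ C * ∫ ω, Z ω ^ 2 ∂P) (hM : 0 ≤ M) (hZ : ∀ ω, |Z ω| ≤ M) :
    |g| ≤ √C * M := by
  have hint : ∫ ω, Z ω ^ 2 ∂P ≤ M ^ 2 := by
    calc ∫ ω, Z ω ^ 2 ∂P ≤ ∫ _, M ^ 2 ∂P :=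
          integral_mono_of_nonneg (ae_of_all _ fun ω => sq_nonneg _) (integrable_const _)
            (ae_of_all _ fun ω => sq_le_sq' (abs_le.1 (hZ ω)).1 (abs_le.1 (hZ ω)).2)
      _ = M ^ 2 := by simp
  calc |g| ≤ √(C * ∫ ω, Z ω ^ 2 ∂P) := abs_le_sqrt hg
    _ = √C * √(∫ ω, Z ω ^ 2 ∂P) := sqrt_mul' _ (integral_nonneg fun ω => sq_nonneg _)
    _ ≤ √C * M := mul_le_mul_of_nonneg_left
        ((sqrt_le_sqrt hint).trans_eq (sqrt_sq hM)) (sqrt_nonneg _)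

lemma mul_le_sub_of_le_sub {D : ℝ}
    (hdom : ∀ X₁ X₂ : Ω → ℝ, G (fun ω => X₁ ω - X₂ ω) ≤ E X₁ - E X₂)
    (hmono : ∀ X Y : Ω → ℝ, (∀ᵐ ω ∂P, X ω ≤ Y ω) → G X ≤ G Y)
    (hconst : ∀ c : ℝ, 0 ≤ c → G (fun _ => c) = c * D)
    {Y₁ Y₂ : Ω → ℝ} {c : ℝ} (hc : 0 ≤ c) (hY : ∀ ω, c ≤ Y₁ ω - Y₂ ω) :
    c * D ≤ E Y₁ - E Y₂ := by
  rw [← hconst c hc]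
  exact (hmono _ _ (ae_of_all _ hY)).trans (hdom Y₁ Y₂)

lemma abs_sub_le_sqrt_mul_of_sub_le [IsProbabilityMeasure P] {C : ℝ}
    (hdom : ∀ X₁ X₂ : Ω → ℝ, E X₁ - E X₂ ≤ G (fun ω => X₁ ω - X₂ ω))
    (hL2 : ∀ Z : Ω → ℝ, G Z ^ 2 ≤ C * ∫ ω, Z ω ^ 2 ∂P)
    {Y₁ Y₂ : Ω → ℝ} {M : ℝ} (hM : 0 ≤ M) (hY : ∀ ω, |Y₁ ω - Y₂ ω| ≤ M) :
    |E Y₁ - E Y₂| ≤ √C * M := by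
  have hbound := fun {Z : Ω → ℝ} (hZ : ∀ ω, |Z ω| ≤ M) =>
    (le_abs_self _).trans (abs_le_sqrt_mul_of_sq_le_mul_integral_sq (hL2 Z) hM hZ)
  rw [abs_sub_le_iff]
  exact ⟨(hdom Y₁ Y₂).trans (hbound hY),
    (hdom Y₂ Y₁).trans (hbound fun ω => abs_sub_comm (Y₁ ω) (Y₂ ω) ▸ hY ω)⟩

end DominatedFunctional

theorem stmt_5_general {Ω : Type*} [MeasurableSpace Ω] (P : Measure Ω) [IsProbabilityMeasure P]
    (T κ cl Cl CκT : ℝ) (hcl : 0 < cl) (hCl : cl ≤ Cl)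
    (E Gpos Gneg : (Ω → ℝ) → ℝ)
    -- two-sided domination of `E` by the g-expectations
    (hdom : ∀ X₁ X₂ : Ω → ℝ,
      Gneg (fun ω => X₁ ω - X₂ ω) ≤ E X₁ - E X₂
        ∧ E X₁ - E X₂ ≤ Gpos (fun ω => X₁ ω - X₂ ω))
    (hGnegmono : ∀ X Y : Ω → ℝ, (∀ᵐ ω ∂P, X ω ≤ Y ω) → Gneg X ≤ Gneg Y)
    -- values of the g-expectations on constants
    (hGnegconst : ∀ c : ℝ, 0 ≤ c → Gneg (fun _ => c) = c * Real.exp (-κ * T))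
    -- the L² estimate `|G^κ[Z]|² ≤ C_{κ,T} E[|Z|²]`
    (hGposL2 : ∀ Z : Ω → ℝ, (Gpos Z) ^ 2 ≤ CκT * ∫ ω, (Z ω) ^ 2 ∂P)
    -- the loss function at the fixed time `t`
    (lt : Ω → ℝ → ℝ)
    (hlmono : ∀ ω, StrictMono (lt ω))
    (hbilip : ∀ ω x y, cl * |x - y| ≤ |lt ω x - lt ω y|
      ∧ |lt ω x - lt ω y| ≤ Cl * |x - y|)
    (X : Ω → ℝ) :
    StrictMono (fun x : ℝ => E (fun ω => lt ω (x + X ω)))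
      ∧ Continuous (fun x : ℝ => E (fun ω => lt ω (x + X ω)))
      ∧ (∀ x : ℝ, 0 ≤ x →
          E (fun ω => lt ω (X ω)) + cl * x * Real.exp (-κ * T)
            ≤ E (fun ω => lt ω (x + X ω)))
      ∧ (∀ x : ℝ, 0 ≤ x →
          E (fun ω => lt ω (-x + X ω))
            ≤ E (fun ω => lt ω (X ω)) - cl * x * Real.exp (-κ * T))
      ∧ Tendsto (fun x : ℝ => E (fun ω => lt ω (x + X ω))) atTop atTop
      ∧ Tendsto (fun x : ℝ => E (fun ω => lt ω (x + X ω))) atBot atBot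
      ∧ Function.Bijective (fun x : ℝ => E (fun ω => lt ω (x + X ω))) := by
  have hgap : ∀ x y : ℝ, x ≤ y → cl * Real.exp (-κ * T) * (y - x)
      ≤ E (fun ω => lt ω (y + X ω)) - E (fun ω => lt ω (x + X ω)) := fun x y hxy => by
    rw [mul_right_comm]
    refine mul_le_sub_of_le_sub (fun X₁ X₂ => (hdom X₁ X₂).1) hGnegmono hGnegconst
      (mul_nonneg hcl.le (sub_nonneg.2 hxy)) fun ω => ?_
    simpa using (hlmono ω).mul_sub_le_sub (fun a b => (hbilip ω a b).1)
      (by gcongr : x + X ω ≤ y + X ω)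
  have hlip : ∀ x y : ℝ, dist (E (fun ω => lt ω (x + X ω))) (E (fun ω => lt ω (y + X ω)))
      ≤ √CκT * Cl * dist x y := fun x y => by
    rw [mul_assoc]
    refine abs_sub_le_sqrt_mul_of_sub_le (fun X₁ X₂ => (hdom X₁ X₂).2) hGposL2
      (mul_nonneg (hcl.le.trans hCl) dist_nonneg) fun ω => ?_
    simpa [Real.dist_eq] using (hbilip ω (x + X ω) (y + X ω)).2
  have hc : 0 < cl * Real.exp (-κ * T) := mul_pos hcl (exp_pos _)
  have hmono := strictMono_of_mul_sub_le_sub hc hgap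
  have hcont := (LipschitzWith.of_dist_le' hlip).continuous
  have htop := tendsto_atTop_atTop_of_mul_sub_le_sub hc hgap
  have hbot := tendsto_atBot_atBot_of_mul_sub_le_sub hc hgap
  refine ⟨hmono, hcont, fun x hx => ?_, fun x hx => ?_, htop, hbot, hmono.injective,
    hcont.surjective htop hbot⟩
  · have := hgap 0 x hx
    simp only [zero_add, sub_zero] at this
    linarith
  · have := hgap (-x) 0 (neg_nonpos.2 hx)
    simp only [zero_add, sub_neg_eq_add] at this
    linarith

/-- Fix `t ∈ [0,T]` and `X ∈ L²(F_T)` and set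
`h(x) := E[l(t, x + X)]` (the loss at time `t` is `lt : Ω → ℝ → ℝ`).  Under the
assumptions on `l` (strictly increasing and bi-Lipschitz in `x`) and on `E`
(monotone, dominated by the g-expectations `G^{±κ}_{0,T}`), the function `h` is
strictly increasing, continuous, satisfies
`h(x) ≥ E[l(t,X)] + c_l x e^{-κT}` and `h(-x) ≤ E[l(t,X)] - c_l x e^{-κT}` for
`x ≥ 0`, hence `h(x) → ±∞` as `x → ±∞`, and therefore `h : ℝ → ℝ` is a bijection
and possesses an inverse. -/
theorem stmt_5 {Ω : Type*} [MeasurableSpace Ω] (P : Measure Ω) [IsProbabilityMeasure P]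
    (T κ cl Cl CκT : ℝ) (hT : 0 < T) (hκ : 0 < κ) (hcl : 0 < cl) (hCl : cl ≤ Cl)
    (E Gpos Gneg : (Ω → ℝ) → ℝ)
    -- monotonicity of `E`
    (hEmono : ∀ X Y : Ω → ℝ, (∀ᵐ ω ∂P, X ω ≤ Y ω) → E X ≤ E Y)
    -- two-sided domination of `E` by the g-expectations
    (hdom : ∀ X₁ X₂ : Ω → ℝ,
      Gneg (fun ω => X₁ ω - X₂ ω) ≤ E X₁ - E X₂
        ∧ E X₁ - E X₂ ≤ Gpos (fun ω => X₁ ω - X₂ ω))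
    (hGnegmono : ∀ X Y : Ω → ℝ, (∀ᵐ ω ∂P, X ω ≤ Y ω) → Gneg X ≤ Gneg Y)
    (hGposmono : ∀ X Y : Ω → ℝ, (∀ᵐ ω ∂P, X ω ≤ Y ω) → Gpos X ≤ Gpos Y)
    -- values of the g-expectations on constants
    (hGnegconst : ∀ c : ℝ, 0 ≤ c → Gneg (fun _ => c) = c * Real.exp (-κ * T))
    (hGposconst : ∀ c : ℝ, 0 ≤ c → Gpos (fun _ => -c) = -(c * Real.exp (-κ * T)))
    -- the L² estimate `|G^κ[Z]|² ≤ C_{κ,T} E[|Z|²]`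
    (hGposL2 : ∀ Z : Ω → ℝ, (Gpos Z) ^ 2 ≤ CκT * ∫ ω, (Z ω) ^ 2 ∂P)
    -- the loss function at the fixed time `t`
    (lt : Ω → ℝ → ℝ)
    (hlmono : ∀ ω, StrictMono (lt ω))
    (hbilip : ∀ ω x y, cl * |x - y| ≤ |lt ω x - lt ω y|
      ∧ |lt ω x - lt ω y| ≤ Cl * |x - y|)
    (hl0 : MemLp (fun ω => lt ω 0) 2 P)
    (X : Ω → ℝ) (hX : MemLp X 2 P) :
    StrictMono (fun x : ℝ => E (fun ω => lt ω (x + X ω)))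
      ∧ Continuous (fun x : ℝ => E (fun ω => lt ω (x + X ω)))
      ∧ (∀ x : ℝ, 0 ≤ x →
          E (fun ω => lt ω (X ω)) + cl * x * Real.exp (-κ * T)
            ≤ E (fun ω => lt ω (x + X ω)))
      ∧ (∀ x : ℝ, 0 ≤ x →
          E (fun ω => lt ω (-x + X ω))
            ≤ E (fun ω => lt ω (X ω)) - cl * x * Real.exp (-κ * T))
      ∧ Tendsto (fun x : ℝ => E (fun ω => lt ω (x + X ω))) atTop atTop
      ∧ Tendsto (fun x : ℝ => E (fun ω => lt ω (x + X ω))) atBot atBot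
      ∧ Function.Bijective (fun x : ℝ => E (fun ω => lt ω (x + X ω))) :=
  stmt_5_general P T κ cl Cl CκT hcl hCl E Gpos Gneg hdom hGnegmono hGnegconst hGposL2 lt hlmono
    hbilip X
end

section
/- Define the operator L_t(X) := inf{x ≥ 0 : E[l(t, x + X)] ≥ 0} for X ∈ L²(F_T). Then L_t is well-defined (the infimum is over a nonempty set and finite) and for all X, Y ∈ L²(F_T): |L_t(X) - L_t(Y)| ≤ (C_l/c_l) e^{κT} G^{κ}_{0,T}[|X - Y|]. -/
open MeasureTheory Real Set

/-!
Since `E` is squeezed between `G^{-κ}` and `G^κ`, shifting the position of a loss by `δ ≥ 0`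
raises `E` by at least `c_l δ e^{-κT}`, while replacing `X` by `Y` lowers it by at most
`C_l G^κ[|X - Y|]`. A large enough shift of `X` is therefore acceptable, and if `x` is
acceptable for `Y` then `x + (C_l / c_l) e^{κT} G^κ[|X - Y|]` is acceptable for `X`; taking
infima and exchanging `X` and `Y` gives the Lipschitz bound.
-/

def acceptanceSet {Ω : Type*} (E : (Ω → ℝ) → ℝ) (ℓ : Ω → ℝ → ℝ) (X : Ω → ℝ) : Set ℝ :=
  {x | 0 ≤ x ∧ 0 ≤ E (fun ω => ℓ ω (x + X ω))}

lemma acceptanceSet_bddBelow {Ω : Type*} (E : (Ω → ℝ) → ℝ) (ℓ : Ω → ℝ → ℝ) (X : Ω → ℝ) :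
    BddBelow (acceptanceSet E ℓ X) :=
  ⟨0, fun _ hx => hx.1⟩

lemma Monotone.mul_sub_le_sub_of_le_abs {f : ℝ → ℝ} {c : ℝ} (hf : Monotone f)
    (hc : ∀ x y, c * |x - y| ≤ |f x - f y|) {a b : ℝ} (hba : b ≤ a) :
    c * (a - b) ≤ f a - f b := by
  simpa only [abs_of_nonneg (sub_nonneg.2 hba), abs_of_nonneg (sub_nonneg.2 (hf hba))]
    using hc a b

lemma csInf_le_csInf_add {s t : Set ℝ} {δ : ℝ} (hs : s.Nonempty) (ht : BddBelow t)
    (hst : ∀ x ∈ s, x + δ ∈ t) : sInf t ≤ sInf s + δ := by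
  rw [← sub_le_iff_le_add]
  exact le_csInf hs fun x hx => sub_le_iff_le_add.2 (csInf_le ht (hst x hx))

section

variable {Ω : Type*} [MeasurableSpace Ω] {P : Measure Ω} {E G : (Ω → ℝ) → ℝ}

lemma nonneg_of_posHomogeneous_of_mono
    (hmono : ∀ X Y : Ω → ℝ, (∀ᵐ ω ∂P, X ω ≤ Y ω) → G X ≤ G Y)
    (hhom : ∀ c : ℝ, 0 < c → ∀ X : Ω → ℝ, G (fun ω => c * X ω) = c * G X)
    {X : Ω → ℝ} (hX : ∀ ω, 0 ≤ X ω) : 0 ≤ G X := by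
  have hzero : G (fun _ => 0) = 0 := by
    have h := hhom 2 two_pos fun _ => 0
    simp only [mul_zero] at h
    linarith
  exact hzero ▸ hmono _ _ (.of_forall hX)

/-- With `G = G^{-κ}` and `a = e^{-κT}`. -/
lemma mul_le_sub_of_shift {ℓ : Ω → ℝ → ℝ} {c a : ℝ} (hc : 0 < c)
    (hmono : ∀ X Y : Ω → ℝ, (∀ᵐ ω ∂P, X ω ≤ Y ω) → G X ≤ G Y)
    (hconst : ∀ b : ℝ, 0 < b → G (fun _ => b) = b * a)
    (hdom : ∀ X₁ X₂ : Ω → ℝ, G (fun ω => X₁ ω - X₂ ω) ≤ E X₁ - E X₂)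
    (hℓ : ∀ ω, Monotone (ℓ ω)) (hlow : ∀ ω x y, c * |x - y| ≤ |ℓ ω x - ℓ ω y|)
    (Z : Ω → ℝ) {x y : ℝ} (hxy : x ≤ y) :
    c * (y - x) * a ≤ E (fun ω => ℓ ω (y + Z ω)) - E (fun ω => ℓ ω (x + Z ω)) := by
  rcases hxy.eq_or_lt with rfl | hxy
  · simp
  have hincr : ∀ ω, c * (y - x) ≤ ℓ ω (y + Z ω) - ℓ ω (x + Z ω) := fun ω => by
    simpa only [add_sub_add_right_eq_sub] using
      (hℓ ω).mul_sub_le_sub_of_le_abs (hlow ω) (by linarith : x + Z ω ≤ y + Z ω)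
  calc c * (y - x) * a = G (fun _ => c * (y - x)) := (hconst _ (by nlinarith)).symm
    _ ≤ G (fun ω => ℓ ω (y + Z ω) - ℓ ω (x + Z ω)) := hmono _ _ (.of_forall hincr)
    _ ≤ _ := hdom _ _

/-- With `G = G^κ`. -/
lemma sub_le_mul_of_swap {ℓ : Ω → ℝ → ℝ} {C : ℝ} (hC : 0 < C)
    (hmono : ∀ X Y : Ω → ℝ, (∀ᵐ ω ∂P, X ω ≤ Y ω) → G X ≤ G Y)
    (hhom : ∀ c : ℝ, 0 < c → ∀ X : Ω → ℝ, G (fun ω => c * X ω) = c * G X)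
    (hdom : ∀ X₁ X₂ : Ω → ℝ, E X₁ - E X₂ ≤ G (fun ω => X₁ ω - X₂ ω))
    (hup : ∀ ω x y, |ℓ ω x - ℓ ω y| ≤ C * |x - y|) (X Y : Ω → ℝ) (x : ℝ) :
    E (fun ω => ℓ ω (x + Y ω)) - E (fun ω => ℓ ω (x + X ω))
      ≤ C * G (fun ω => |X ω - Y ω|) := by
  have hincr : ∀ ω, ℓ ω (x + Y ω) - ℓ ω (x + X ω) ≤ C * |X ω - Y ω| := fun ω => by
    refine (le_abs_self _).trans ((hup ω _ _).trans_eq ?_)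
    rw [add_sub_add_left_eq_sub, abs_sub_comm]
  calc _ ≤ G (fun ω => ℓ ω (x + Y ω) - ℓ ω (x + X ω)) := hdom _ _
    _ ≤ G (fun ω => C * |X ω - Y ω|) := hmono _ _ (.of_forall hincr)
    _ = _ := hhom C hC _

end

section

variable {Ω : Type*} [MeasurableSpace Ω] {P : Measure Ω} {E Gpos Gneg : (Ω → ℝ) → ℝ}
  {ℓ : Ω → ℝ → ℝ} {c C a : ℝ}

lemma acceptanceSet_nonempty (hc : 0 < c) (ha : 0 < a)
    (hmono : ∀ X Y : Ω → ℝ, (∀ᵐ ω ∂P, X ω ≤ Y ω) → Gneg X ≤ Gneg Y)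
    (hconst : ∀ b : ℝ, 0 < b → Gneg (fun _ => b) = b * a)
    (hdom : ∀ X₁ X₂ : Ω → ℝ, Gneg (fun ω => X₁ ω - X₂ ω) ≤ E X₁ - E X₂)
    (hℓ : ∀ ω, Monotone (ℓ ω)) (hlow : ∀ ω x y, c * |x - y| ≤ |ℓ ω x - ℓ ω y|)
    (X : Ω → ℝ) : (acceptanceSet E ℓ X).Nonempty := by
  set x := max 0 (-E (fun ω => ℓ ω (0 + X ω)) / (c * a))
  have hx : -E (fun ω => ℓ ω (0 + X ω)) ≤ c * (x - 0) * a := by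
    rw [sub_zero, mul_right_comm, ← div_le_iff₀' (by positivity)]
    exact le_max_right _ _
  have hshift := mul_le_sub_of_shift hc hmono hconst hdom hℓ hlow X (le_max_left 0 _ : 0 ≤ x)
  exact ⟨x, le_max_left _ _, by linarith⟩

lemma sInf_acceptanceSet_le_add (hc : 0 < c) (hC : 0 < C) (ha : 0 < a)
    (hGnegmono : ∀ X Y : Ω → ℝ, (∀ᵐ ω ∂P, X ω ≤ Y ω) → Gneg X ≤ Gneg Y)
    (hGposmono : ∀ X Y : Ω → ℝ, (∀ᵐ ω ∂P, X ω ≤ Y ω) → Gpos X ≤ Gpos Y)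
    (hGnegconst : ∀ b : ℝ, 0 < b → Gneg (fun _ => b) = b * a)
    (hGposhom : ∀ b : ℝ, 0 < b → ∀ X : Ω → ℝ, Gpos (fun ω => b * X ω) = b * Gpos X)
    (hdom : ∀ X₁ X₂ : Ω → ℝ, Gneg (fun ω => X₁ ω - X₂ ω) ≤ E X₁ - E X₂
      ∧ E X₁ - E X₂ ≤ Gpos (fun ω => X₁ ω - X₂ ω))
    (hℓ : ∀ ω, Monotone (ℓ ω))
    (hbilip : ∀ ω x y, c * |x - y| ≤ |ℓ ω x - ℓ ω y| ∧ |ℓ ω x - ℓ ω y| ≤ C * |x - y|)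
    (X Y : Ω → ℝ) :
    sInf (acceptanceSet E ℓ X)
      ≤ sInf (acceptanceSet E ℓ Y) + C / c * a⁻¹ * Gpos (fun ω => |X ω - Y ω|) := by
  set δ := C / c * a⁻¹ * Gpos (fun ω => |X ω - Y ω|)
  have hδ : 0 ≤ δ := by
    have := nonneg_of_posHomogeneous_of_mono hGposmono hGposhom
      (X := fun ω => |X ω - Y ω|) fun _ => abs_nonneg _
    positivity
  have hcost : c * δ * a = C * Gpos (fun ω => |X ω - Y ω|) := by
    simp only [δ]
    field_simp
  refine csInf_le_csInf_add
    (acceptanceSet_nonempty hc ha hGnegmono hGnegconst (fun X₁ X₂ => (hdom X₁ X₂).1) hℓ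
      (fun ω x y => (hbilip ω x y).1) Y)
    (acceptanceSet_bddBelow E ℓ X) fun x ⟨hx, hEx⟩ => ⟨by linarith, ?_⟩
  have hshift := mul_le_sub_of_shift hc hGnegmono hGnegconst (fun X₁ X₂ => (hdom X₁ X₂).1)
    hℓ (fun ω x y => (hbilip ω x y).1) Y (le_add_of_nonneg_right hδ : x ≤ x + δ)
  have hswap := sub_le_mul_of_swap hC hGposmono hGposhom (fun X₁ X₂ => (hdom X₁ X₂).2)
    (fun ω x y => (hbilip ω x y).2) X Y (x + δ)
  rw [add_sub_cancel_left] at hshift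
  linarith

end

theorem stmt_6_general {Ω : Type*} [MeasurableSpace Ω] (P : Measure Ω)
    (T κ cl Cl : ℝ) (hcl : 0 < cl) (hCl : cl ≤ Cl)
    (E Gpos Gneg : (Ω → ℝ) → ℝ)
    -- two-sided domination of `E` by the g-expectations
    (hdom : ∀ X₁ X₂ : Ω → ℝ,
      Gneg (fun ω => X₁ ω - X₂ ω) ≤ E X₁ - E X₂
        ∧ E X₁ - E X₂ ≤ Gpos (fun ω => X₁ ω - X₂ ω))
    (hGnegmono : ∀ X Y : Ω → ℝ, (∀ᵐ ω ∂P, X ω ≤ Y ω) → Gneg X ≤ Gneg Y)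
    (hGposmono : ∀ X Y : Ω → ℝ, (∀ᵐ ω ∂P, X ω ≤ Y ω) → Gpos X ≤ Gpos Y)
    -- positive homogeneity of `G^κ` and the value of `G^{-κ}` on constants
    (hGposhom : ∀ (c : ℝ), 0 < c → ∀ X : Ω → ℝ,
      Gpos (fun ω => c * X ω) = c * Gpos X)
    (hGnegconst : ∀ c : ℝ, 0 < c → Gneg (fun _ => c) = c * Real.exp (-κ * T))
    -- the loss function at the fixed time `t`
    (lt : Ω → ℝ → ℝ)
    (hlmono : ∀ ω, StrictMono (lt ω))
    (hbilip : ∀ ω x y, cl * |x - y| ≤ |lt ω x - lt ω y|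
      ∧ |lt ω x - lt ω y| ≤ Cl * |x - y|)
    (L : (Ω → ℝ) → ℝ)
    (hL : ∀ X : Ω → ℝ, L X = sInf {x : ℝ | 0 ≤ x ∧ 0 ≤ E (fun ω => lt ω (x + X ω))}) :
    (∀ X : Ω → ℝ, MemLp X 2 P →
      {x : ℝ | 0 ≤ x ∧ 0 ≤ E (fun ω => lt ω (x + X ω))}.Nonempty)
      ∧ ∀ X Y : Ω → ℝ, MemLp X 2 P → MemLp Y 2 P →
        |L X - L Y| ≤ (Cl / cl) * Real.exp (κ * T) * Gpos (fun ω => |X ω - Y ω|) := by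
  have hmono : ∀ ω, Monotone (lt ω) := fun ω => (hlmono ω).monotone
  have hexp : Real.exp (κ * T) = (Real.exp (-κ * T))⁻¹ := by rw [neg_mul, Real.exp_neg, inv_inv]
  have hLle : ∀ X Y : Ω → ℝ,
      L X ≤ L Y + Cl / cl * Real.exp (κ * T) * Gpos (fun ω => |X ω - Y ω|) := fun X Y => by
    rw [hL, hL, hexp]
    exact sInf_acceptanceSet_le_add hcl (hcl.trans_le hCl) (Real.exp_pos _) hGnegmono
      hGposmono hGnegconst hGposhom hdom hmono hbilip X Y
  refine ⟨fun X _ => acceptanceSet_nonempty hcl (Real.exp_pos _) hGnegmono hGnegconst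
    (fun X₁ X₂ => (hdom X₁ X₂).1) hmono (fun ω x y => (hbilip ω x y).1) X, fun X Y _ _ => ?_⟩
  have hYX := hLle Y X
  simp only [abs_sub_comm (Y _)] at hYX
  rw [abs_sub_le_iff]
  constructor <;> linarith [hLle X Y]

/-- Define the operator
`L_t(X) := inf{x ≥ 0 : E[l(t, x + X)] ≥ 0}` for `X ∈ L²(F_T)` (the loss at the fixed
time `t` being `lt : Ω → ℝ → ℝ`).  Then `L_t` is well defined (the infimum is over a
nonempty set, hence finite) and for all `X, Y ∈ L²(F_T)`:
`|L_t(X) - L_t(Y)| ≤ (C_l/c_l) e^{κT} G^κ_{0,T}[|X - Y|]`. -/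
theorem stmt_6 {Ω : Type*} [MeasurableSpace Ω] (P : Measure Ω) [IsProbabilityMeasure P]
    (T κ cl Cl : ℝ) (hT : 0 < T) (hκ : 0 < κ) (hcl : 0 < cl) (hCl : cl ≤ Cl)
    (E Gpos Gneg : (Ω → ℝ) → ℝ)
    -- monotonicity of `E`
    (hEmono : ∀ X Y : Ω → ℝ, (∀ᵐ ω ∂P, X ω ≤ Y ω) → E X ≤ E Y)
    -- two-sided domination of `E` by the g-expectations
    (hdom : ∀ X₁ X₂ : Ω → ℝ,
      Gneg (fun ω => X₁ ω - X₂ ω) ≤ E X₁ - E X₂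
        ∧ E X₁ - E X₂ ≤ Gpos (fun ω => X₁ ω - X₂ ω))
    (hGnegmono : ∀ X Y : Ω → ℝ, (∀ᵐ ω ∂P, X ω ≤ Y ω) → Gneg X ≤ Gneg Y)
    (hGposmono : ∀ X Y : Ω → ℝ, (∀ᵐ ω ∂P, X ω ≤ Y ω) → Gpos X ≤ Gpos Y)
    -- positive homogeneity of `G^κ` and the value of `G^{-κ}` on constants
    (hGposhom : ∀ (c : ℝ), 0 < c → ∀ X : Ω → ℝ,
      Gpos (fun ω => c * X ω) = c * Gpos X)
    (hGnegconst : ∀ c : ℝ, 0 < c → Gneg (fun _ => c) = c * Real.exp (-κ * T))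
    -- the loss function at the fixed time `t`
    (lt : Ω → ℝ → ℝ)
    (hlmono : ∀ ω, StrictMono (lt ω))
    (hbilip : ∀ ω x y, cl * |x - y| ≤ |lt ω x - lt ω y|
      ∧ |lt ω x - lt ω y| ≤ Cl * |x - y|)
    (hl0 : MemLp (fun ω => lt ω 0) 2 P)
    (L : (Ω → ℝ) → ℝ)
    (hL : ∀ X : Ω → ℝ, L X = sInf {x : ℝ | 0 ≤ x ∧ 0 ≤ E (fun ω => lt ω (x + X ω))}) :
    (∀ X : Ω → ℝ, MemLp X 2 P →
      {x : ℝ | 0 ≤ x ∧ 0 ≤ E (fun ω => lt ω (x + X ω))}.Nonempty)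
      ∧ ∀ X Y : Ω → ℝ, MemLp X 2 P → MemLp Y 2 P →
        |L X - L Y| ≤ (Cl / cl) * Real.exp (κ * T) * Gpos (fun ω => |X ω - Y ω|) :=
  stmt_6_general P T κ cl Cl hcl hCl E Gpos Gneg hdom hGnegmono hGposmono hGposhom hGnegconst lt
    hlmono hbilip L hL
end
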